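/- arXiv:1405.3327 — 3 statements merged into one kernel-verified Lean document; each statement's English description precedes it below -/
import Mathlib

section
/- There exists a universal constant C < ∞ such that for every N ∈ ℕ and every x ∈ ℝ^N with ∑_i x_i = 0, denoting by x̄ the associated step function on the torus: (i) (1/C)‖x̄‖²_{H^{-1}} ≤ (1/N)⟨A^{-1}x, x⟩ ≤ C‖x̄‖²_{H^{-1}} (in fact ‖x̄‖²_{H^{-1}} ≤ (1/N)⟨A^{-1}x, x⟩ ≤ 3‖x̄‖²_{H^{-1}}); and (ii) for every C₀ > 0 there is C' depending only on C₀ such that if (1/N)∑_i x_i² ≤ C₀ then |‖x̄‖²_{H^{-1}} − (1/N)⟨A^{-1}x, x⟩| ≤ C'/N. -/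
open MeasureTheory Real intervalIntegral

noncomputable section

/-- The discrete (periodic) operator `A`, `(Ax)ᵢ = N²(-x_{i-1} + 2xᵢ - x_{i+1})`. -/
def Amat (N : ℕ) (x : Fin N → ℝ) : Fin N → ℝ := fun i =>
  (N : ℝ) ^ 2 * (2 * x i - x ⟨(i.val + 1) % N, Nat.mod_lt _ i.pos⟩
    - x ⟨(i.val + (N - 1)) % N, Nat.mod_lt _ i.pos⟩)

/-- The step function on `[0,1)` associated to `x ∈ ℝ^N`: it takes the value `x_j` on the
`j`-th subinterval of length `1/N`. -/
def stepFun (N : ℕ) (x : Fin N → ℝ) (θ : ℝ) : ℝ :=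
  if h : ⌊θ * N⌋₊ < N then x ⟨⌊θ * N⌋₊, h⟩ else 0

/-- The mean-zero primitive `w` of the step function `x̄`:
`w(θ) = ∫₀^θ x̄(s) ds - ∫₀¹ ∫₀^t x̄(s) ds dt`. -/
def wFun (N : ℕ) (x : Fin N → ℝ) (θ : ℝ) : ℝ :=
  (∫ s in (0:ℝ)..θ, stepFun N x s)
    - ∫ t in (0:ℝ)..(1:ℝ), (∫ s in (0:ℝ)..t, stepFun N x s)

/-- The squared `H⁻¹` norm of the step function `x̄` on the torus:
`‖x̄‖²_{H⁻¹} = ∫₀¹ w(θ)² dθ`. -/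
def Hm1sq (N : ℕ) (x : Fin N → ℝ) : ℝ := ∫ θ in (0:ℝ)..(1:ℝ), (wFun N x θ) ^ 2

/-!
On the cell `[k/N, (k+1)/N]` the primitive of `x̄` is affine, equal to
`u_k = (1/N) ∑_{i<k} x_i` at the left end and of slope `x_k`. Integrating cell by cell gives
the exact identity `‖x̄‖²_{H⁻¹} = (1/N) ∑_k (u_k - ū)² - (1/(6N³)) ∑ x_i²`, the cross terms
being handled by `∑ u_k x_k = -(1/(2N)) ∑ x_k²` (summation by parts, `u_0 = u_N = 0`).
If `Az = x` and `d_i = N (z_i - z_{i-1})`, then `u_k = d_0 - d_k`, `∑ d_i = 0` and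
`∑ z_i x_i = ∑ d_i²`, so the first term is exactly `(1/N)⟨A⁻¹x, x⟩`. The correction is
nonnegative, at most `(2/3)(1/N)⟨A⁻¹x, x⟩` since `x_k = N (u_{k+1} - u_k)` and `u` is
`N`-periodic, and at most `C₀/(6N²)` under the bound `(1/N) ∑ x_i² ≤ C₀`.
-/

open Finset

namespace Hm1Comparison

variable {N : ℕ}

/-- `stepFun N x θ = xSeq N x ⌊θ * N⌋₊` holds by definition. -/
def xSeq (N : ℕ) (x : Fin N → ℝ) (k : ℕ) : ℝ := if h : k < N then x ⟨k, h⟩ else 0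

def gridPrimitive (N : ℕ) (x : Fin N → ℝ) (k : ℕ) : ℝ := (∑ i ∈ range k, xSeq N x i) / N

def stepPrimitive (N : ℕ) (x : Fin N → ℝ) (θ : ℝ) : ℝ := ∫ s in (0:ℝ)..θ, stepFun N x s

lemma sum_sq_sub_le_four_mul_sum_sq (u : ℕ → ℝ) {n : ℕ} (h : u n = u 0) (c : ℝ) :
    ∑ k ∈ range n, (u (k + 1) - u k) ^ 2 ≤ 4 * ∑ k ∈ range n, (u k - c) ^ 2 := by
  have hshift : ∑ k ∈ range n, (u (k + 1) - c) ^ 2 = ∑ k ∈ range n, (u k - c) ^ 2 := by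
    have h1 := sum_range_succ' (fun k => (u k - c) ^ 2) n
    rw [sum_range_succ, h] at h1
    linarith
  calc ∑ k ∈ range n, (u (k + 1) - u k) ^ 2
      ≤ ∑ k ∈ range n, (2 * (u (k + 1) - c) ^ 2 + 2 * (u k - c) ^ 2) :=
        sum_le_sum fun k _ => by nlinarith [sq_nonneg (u (k + 1) + u k - 2 * c)]
    _ = 4 * ∑ k ∈ range n, (u k - c) ^ 2 := by
        rw [sum_add_distrib, ← mul_sum, ← mul_sum, hshift]; ring

lemma integral_affine (c b h : ℝ) : ∫ t in (0:ℝ)..h, (c + b * t) = c * h + b * h ^ 2 / 2 := by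
  have hderiv (t : ℝ) : HasDerivAt (fun t => c * t + b * t ^ 2 / 2) (c + b * t) t := by
    refine (((hasDerivAt_id t).const_mul c).add
      (((hasDerivAt_pow 2 t).const_mul b).div_const 2)).congr_deriv ?_
    norm_num; ring
  rw [integral_eq_sub_of_hasDerivAt (fun t _ => hderiv t)
    (Continuous.intervalIntegrable (by fun_prop) _ _)]
  ring

lemma integral_affine_sq (c b h : ℝ) :
    ∫ t in (0:ℝ)..h, (c + b * t) ^ 2 = c ^ 2 * h + c * b * h ^ 2 + b ^ 2 * h ^ 3 / 3 := by
  have hderiv (t : ℝ) : HasDerivAt (fun t => c ^ 2 * t + c * b * t ^ 2 + b ^ 2 * t ^ 3 / 3)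
      ((c + b * t) ^ 2) t := by
    refine ((((hasDerivAt_id t).const_mul (c ^ 2)).add
      ((hasDerivAt_pow 2 t).const_mul (c * b))).add
      (((hasDerivAt_pow 3 t).const_mul (b ^ 2)).div_const 3)).congr_deriv ?_
    norm_num; ring
  rw [integral_eq_sub_of_hasDerivAt (fun t _ => hderiv t)
    (Continuous.intervalIntegrable (by fun_prop) _ _)]
  ring

section StepFunction

variable (x : Fin N → ℝ)

lemma xSeq_val (i : Fin N) : xSeq N x i = x i := by simp [xSeq]

lemma sum_range_xSeq_comp (f : ℝ → ℝ) : ∑ k ∈ range N, f (xSeq N x k) = ∑ i, f (x i) := by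
  simp [← Fin.sum_univ_eq_sum_range (fun k => f (xSeq N x k)), xSeq_val]

lemma sum_range_xSeq : ∑ k ∈ range N, xSeq N x k = ∑ i, x i :=
  sum_range_xSeq_comp x id

lemma gridPrimitive_zero : gridPrimitive N x 0 = 0 := by simp [gridPrimitive]

lemma gridPrimitive_succ (k : ℕ) :
    gridPrimitive N x (k + 1) = gridPrimitive N x k + xSeq N x k / N := by
  simp [gridPrimitive, sum_range_succ, add_div]

lemma xSeq_eq_mul_sub (hN : 0 < N) (k : ℕ) :
    xSeq N x k = N * (gridPrimitive N x (k + 1) - gridPrimitive N x k) := by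
  rw [gridPrimitive_succ]
  field_simp
  ring

lemma gridPrimitive_self (hx : ∑ i, x i = 0) : gridPrimitive N x N = 0 := by
  simp [gridPrimitive, sum_range_xSeq, hx]

lemma sum_gridPrimitive_mul_xSeq (hN : 0 < N) (hx : ∑ i, x i = 0) :
    ∑ k ∈ range N, gridPrimitive N x k * xSeq N x k = -(∑ i, x i ^ 2) / (2 * N) := by
  have hN' : (N : ℝ) ≠ 0 := by positivity
  have hstep (k : ℕ) : gridPrimitive N x (k + 1) ^ 2 - gridPrimitive N x k ^ 2
      = 2 / N * (gridPrimitive N x k * xSeq N x k) + xSeq N x k ^ 2 / N ^ 2 := by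
    rw [gridPrimitive_succ]; field_simp; ring
  have htel := sum_range_sub (fun k => gridPrimitive N x k ^ 2) N
  rw [gridPrimitive_self x hx, gridPrimitive_zero] at htel
  simp only [hstep, sum_add_distrib, ← mul_sum, ← sum_div, sum_range_xSeq_comp x (· ^ 2)] at htel
  field_simp at htel ⊢
  linarith

lemma measurable_stepFun : Measurable (stepFun N x) :=
  (measurable_from_nat (f := xSeq N x)).comp (Nat.measurable_floor.comp (measurable_id.mul_const _))

lemma abs_xSeq_le (k : ℕ) : |xSeq N x k| ≤ ∑ i, |x i| := by
  unfold xSeq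
  split_ifs
  · exact single_le_sum (f := fun i => |x i|) (fun i _ => abs_nonneg _) (mem_univ _)
  · simpa using sum_nonneg fun i _ => abs_nonneg (x i)

lemma intervalIntegrable_stepFun (a b : ℝ) : IntervalIntegrable (stepFun N x) volume a b := by
  rw [intervalIntegrable_iff]
  exact Measure.integrableOn_of_bounded measure_Ioc_lt_top.ne
    (measurable_stepFun x).aestronglyMeasurable
    (ae_of_all _ fun θ => (Real.norm_eq_abs _).trans_le (abs_xSeq_le x _))

lemma continuous_stepPrimitive : Continuous (stepPrimitive N x) :=
  intervalIntegral.continuous_primitive (intervalIntegrable_stepFun x) 0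

lemma cell_le (k : ℕ) : (k : ℝ) / N ≤ (k + 1) / N :=
  div_le_div_of_nonneg_right (by linarith) (Nat.cast_nonneg N)

lemma stepFun_of_mem_Ico {k : ℕ} (hk : k < N) {s : ℝ}
    (hs : s ∈ Set.Ico ((k : ℝ) / N) ((k + 1) / N)) : stepFun N x s = xSeq N x k := by
  have hN : (0 : ℝ) < N := by exact_mod_cast k.zero_le.trans_lt hk
  rw [Set.mem_Ico, div_le_iff₀ hN, lt_div_iff₀ hN] at hs
  show xSeq N x ⌊s * N⌋₊ = _
  rw [(Nat.floor_eq_iff (k.cast_nonneg.trans hs.1)).2 hs]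

lemma integral_stepFun_of_mem_cell {k : ℕ} (hk : k < N) {α β : ℝ}
    (hα : α ∈ Set.Icc ((k : ℝ) / N) ((k + 1) / N)) (hβ : β ∈ Set.Icc ((k : ℝ) / N) ((k + 1) / N)) :
    ∫ s in α..β, stepFun N x s = xSeq N x k * (β - α) := by
  have hae : ∀ᵐ s, s ∈ Set.uIoc α β → stepFun N x s = xSeq N x k := by
    filter_upwards [Measure.ae_ne volume (((k : ℝ) + 1) / N)] with s hne hs
    refine stepFun_of_mem_Ico x hk ⟨(le_min hα.1 hβ.1).trans hs.1.le, ?_⟩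
    exact (hs.2.trans (max_le hα.2 hβ.2)).lt_of_ne hne
  rw [intervalIntegral.integral_congr_ae hae, intervalIntegral.integral_const, smul_eq_mul,
    mul_comm]

lemma stepPrimitive_natCast_div {k : ℕ} (hk : k ≤ N) :
    stepPrimitive N x (k / N) = gridPrimitive N x k := by
  induction k with
  | zero => simp [stepPrimitive, gridPrimitive_zero]
  | succ k ih =>
    have hk' : k < N := hk
    rw [stepPrimitive, Nat.cast_succ, ← integral_add_adjacent_intervals
      (intervalIntegrable_stepFun x 0 (k / N)) (intervalIntegrable_stepFun x _ _), ← stepPrimitive,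
      ih hk'.le, integral_stepFun_of_mem_cell x hk' (Set.left_mem_Icc.2 (cell_le k))
      (Set.right_mem_Icc.2 (cell_le k)), gridPrimitive_succ]
    ring

lemma stepPrimitive_of_mem_cell {k : ℕ} (hk : k < N) {θ : ℝ}
    (hθ : θ ∈ Set.Icc ((k : ℝ) / N) ((k + 1) / N)) :
    stepPrimitive N x θ = gridPrimitive N x k + xSeq N x k * (θ - k / N) := by
  rw [stepPrimitive, ← integral_add_adjacent_intervals (intervalIntegrable_stepFun x 0 (k / N))
    (intervalIntegrable_stepFun x _ θ), ← stepPrimitive, stepPrimitive_natCast_div x hk.le,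
    integral_stepFun_of_mem_cell x hk (Set.left_mem_Icc.2 (cell_le k)) hθ]

lemma integral_comp_stepPrimitive {g : ℝ → ℝ} (hg : Continuous g) (hN : 0 < N) :
    ∫ θ in (0:ℝ)..1, g (stepPrimitive N x θ)
      = ∑ k ∈ range N, ∫ t in (0:ℝ)..1 / N, g (gridPrimitive N x k + xSeq N x k * t) := by
  have hN' : (N : ℝ) ≠ 0 := by positivity
  have hcells := sum_integral_adjacent_intervals (n := N) (a := fun k : ℕ => (k : ℝ) / N)
    (f := fun θ => g (stepPrimitive N x θ)) (μ := volume)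
    fun k _ => (hg.comp (continuous_stepPrimitive x)).intervalIntegrable _ _
  simp only [Nat.cast_zero, zero_div, div_self hN'] at hcells
  rw [← hcells]
  refine sum_congr rfl fun k hk => ?_
  have hk := mem_range.1 hk
  rw [Nat.cast_succ, intervalIntegral.integral_congr
    (g := fun θ => g (gridPrimitive N x k + xSeq N x k * (θ - k / N))) fun θ hθ => ?_,
    intervalIntegral.integral_comp_sub_right (fun t => g (gridPrimitive N x k + xSeq N x k * t))]
  · rw [sub_self, add_div, add_sub_cancel_left]
  · rw [Set.uIcc_of_le (cell_le k)] at hθ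
    simp only [stepPrimitive_of_mem_cell x hk hθ]

lemma integral_stepPrimitive (hN : 0 < N) (hx : ∑ i, x i = 0) :
    ∫ θ in (0:ℝ)..1, stepPrimitive N x θ = (∑ k ∈ range N, gridPrimitive N x k) / N := by
  rw [integral_comp_stepPrimitive x (g := fun y => y) continuous_id hN]
  simp only [integral_affine, sum_add_distrib, ← sum_mul, ← sum_div, sum_range_xSeq, hx]
  ring

lemma Hm1sq_eq_sum_sq_gridPrimitive_sub_mean (hN : 0 < N) (hx : ∑ i, x i = 0) :
    Hm1sq N x = (∑ k ∈ range N,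
        (gridPrimitive N x k - (∑ j ∈ range N, gridPrimitive N x j) / N) ^ 2) / N
      - (∑ i, x i ^ 2) / (6 * N ^ 3) := by
  have hN' : (N : ℝ) ≠ 0 := by positivity
  set m := (∑ j ∈ range N, gridPrimitive N x j) / N with hm
  change ∫ θ in (0:ℝ)..1, (stepPrimitive N x θ - ∫ t in (0:ℝ)..1, stepPrimitive N x t) ^ 2 = _
  rw [integral_stepPrimitive x hN hx, ← hm,
    integral_comp_stepPrimitive x (g := fun y => (y - m) ^ 2) (by fun_prop) hN]
  simp only [add_sub_right_comm, integral_affine_sq, sum_add_distrib, ← sum_mul, ← sum_div,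
    sub_mul, sum_sub_distrib, sum_gridPrimitive_mul_xSeq x hN hx, ← mul_sum,
    sum_range_xSeq, sum_range_xSeq_comp x (· ^ 2), hx]
  field_simp
  ring

end StepFunction

section Cycle

def cycSucc (N : ℕ) (i : Fin N) : Fin N := ⟨(i.val + 1) % N, Nat.mod_lt _ i.pos⟩

def cycPred (N : ℕ) (i : Fin N) : Fin N := ⟨(i.val + (N - 1)) % N, Nat.mod_lt _ i.pos⟩

lemma cycPred_cycSucc (i : Fin N) : cycPred N (cycSucc N i) = i := by
  have := i.pos
  ext
  simp only [cycPred, cycSucc, Nat.mod_add_mod]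
  rw [show i.val + 1 + (N - 1) = i.val + N by omega, Nat.add_mod_right, Nat.mod_eq_of_lt i.isLt]

lemma cycSucc_cycPred (i : Fin N) : cycSucc N (cycPred N i) = i := by
  have := i.pos
  ext
  simp only [cycPred, cycSucc, Nat.mod_add_mod]
  rw [show i.val + (N - 1) + 1 = i.val + N by omega, Nat.add_mod_right, Nat.mod_eq_of_lt i.isLt]

def cycShift (N : ℕ) : Equiv.Perm (Fin N) :=
  ⟨cycSucc N, cycPred N, cycPred_cycSucc, cycSucc_cycPred⟩

lemma sum_comp_cycSucc {M : Type*} [AddCommMonoid M] (f : Fin N → M) :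
    ∑ i, f (cycSucc N i) = ∑ i, f i :=
  Equiv.sum_comp (cycShift N) f

lemma sum_comp_cycPred {M : Type*} [AddCommMonoid M] (f : Fin N → M) :
    ∑ i, f (cycPred N i) = ∑ i, f i :=
  Equiv.sum_comp (cycShift N).symm f

def discreteGrad (N : ℕ) (z : Fin N → ℝ) (i : Fin N) : ℝ := N * (z i - z (cycPred N i))

variable (z : Fin N → ℝ)

lemma Amat_eq_discreteGrad (i : Fin N) :
    Amat N z i = N * (discreteGrad N z i - discreteGrad N z (cycSucc N i)) := by
  change (N : ℝ) ^ 2 * (2 * z i - z (cycSucc N i) - z (cycPred N i)) = _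
  rw [discreteGrad, discreteGrad, cycPred_cycSucc]
  ring

lemma sum_discreteGrad : ∑ i, discreteGrad N z i = 0 := by
  simp [discreteGrad, ← mul_sum, sum_sub_distrib, sum_comp_cycPred]

lemma sum_Amat : ∑ i, Amat N z i = 0 := by
  simp [Amat_eq_discreteGrad, ← mul_sum, sum_sub_distrib, sum_comp_cycSucc]

lemma sum_mul_Amat : ∑ i, z i * Amat N z i = ∑ i, discreteGrad N z i ^ 2 := by
  set d := discreteGrad N z
  have hshift : ∑ i, N * z i * d (cycSucc N i) = ∑ i, N * z (cycPred N i) * d i := by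
    rw [← sum_comp_cycSucc (fun i => N * z (cycPred N i) * d i)]
    simp only [cycPred_cycSucc]
  calc ∑ i, z i * Amat N z i = ∑ i, N * z i * d i - ∑ i, N * z i * d (cycSucc N i) := by
        rw [← sum_sub_distrib]
        exact sum_congr rfl fun i _ => by rw [Amat_eq_discreteGrad]; ring
    _ = ∑ i, d i ^ 2 := by
        rw [hshift, ← sum_sub_distrib]
        exact sum_congr rfl fun i _ => by simp only [d, discreteGrad]; ring

lemma gridPrimitive_Amat (hN : 0 < N) {k : ℕ} (hk : k < N) :
    gridPrimitive N (Amat N z) k = discreteGrad N z ⟨0, hN⟩ - discreteGrad N z ⟨k, hk⟩ := by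
  have hN' : (N : ℝ) ≠ 0 := by positivity
  induction k with
  | zero => simp [gridPrimitive_zero]
  | succ k ih =>
    have hk' : k < N := by omega
    have hsucc : cycSucc N ⟨k, hk'⟩ = ⟨k + 1, hk⟩ := by
      ext; simp [cycSucc, Nat.mod_eq_of_lt hk]
    rw [gridPrimitive_succ, ih hk', xSeq, dif_pos hk', Amat_eq_discreteGrad, hsucc]
    field_simp
    ring

lemma sum_sq_gridPrimitive_Amat_sub_mean (hN : 0 < N) :
    ∑ k ∈ range N, (gridPrimitive N (Amat N z) k
        - (∑ j ∈ range N, gridPrimitive N (Amat N z) j) / N) ^ 2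
      = ∑ i, z i * Amat N z i := by
  have hu (i : Fin N) :
      gridPrimitive N (Amat N z) i = discreteGrad N z ⟨0, hN⟩ - discreteGrad N z i :=
    gridPrimitive_Amat z hN i.isLt
  have hmean : (∑ j ∈ range N, gridPrimitive N (Amat N z) j) / N = discreteGrad N z ⟨0, hN⟩ := by
    rw [← Fin.sum_univ_eq_sum_range]
    simp only [hu, sum_sub_distrib, sum_const, card_univ, Fintype.card_fin, nsmul_eq_mul,
      sum_discreteGrad, sub_zero]
    field_simp
  rw [hmean, ← Fin.sum_univ_eq_sum_range (fun k => (gridPrimitive N (Amat N z) k - _) ^ 2),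
    sum_mul_Amat]
  simp [hu]

lemma sum_sq_Amat_le : ∑ i, Amat N z i ^ 2 ≤ 4 * N ^ 2 * ∑ i, z i * Amat N z i := by
  rcases N.eq_zero_or_pos with rfl | hN
  · simp
  have hperiodic : gridPrimitive N (Amat N z) N = gridPrimitive N (Amat N z) 0 := by
    rw [gridPrimitive_self _ (sum_Amat z), gridPrimitive_zero]
  calc ∑ i, Amat N z i ^ 2 = ∑ k ∈ range N, xSeq N (Amat N z) k ^ 2 :=
        (sum_range_xSeq_comp _ (· ^ 2)).symm
    _ = N ^ 2 * ∑ k ∈ range N,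
          (gridPrimitive N (Amat N z) (k + 1) - gridPrimitive N (Amat N z) k) ^ 2 := by
        simp only [xSeq_eq_mul_sub _ hN, mul_pow, mul_sum]
    _ ≤ N ^ 2 * (4 * ∑ k ∈ range N, (gridPrimitive N (Amat N z) k
          - (∑ j ∈ range N, gridPrimitive N (Amat N z) j) / N) ^ 2) := by
        gcongr; exact sum_sq_sub_le_four_mul_sum_sq _ hperiodic _
    _ = 4 * N ^ 2 * ∑ i, z i * Amat N z i := by
        rw [sum_sq_gridPrimitive_Amat_sub_mean z hN]; ring

lemma Hm1sq_Amat :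
    Hm1sq N (Amat N z) = 1 / N * ∑ i, z i * Amat N z i - 1 / (6 * N ^ 3) * ∑ i, Amat N z i ^ 2 := by
  rcases N.eq_zero_or_pos with rfl | hN
  · simp [Hm1sq, wFun, stepFun]
  rw [Hm1sq_eq_sum_sq_gridPrimitive_sub_mean _ hN (sum_Amat z),
    sum_sq_gridPrimitive_Amat_sub_mean z hN]
  ring

lemma one_div_six_mul_sum_sq_Amat_le :
    1 / (6 * N ^ 3) * ∑ i, Amat N z i ^ 2 ≤ 2 / 3 * (1 / N * ∑ i, z i * Amat N z i) := by
  calc 1 / (6 * N ^ 3) * ∑ i, Amat N z i ^ 2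
      ≤ 1 / (6 * N ^ 3) * (4 * N ^ 2 * ∑ i, z i * Amat N z i) := by
        gcongr; exact sum_sq_Amat_le z
    _ = 2 / 3 * (1 / N * ∑ i, z i * Amat N z i) := by
        rcases eq_or_ne (N : ℝ) 0 with hN | hN
        · simp [hN]
        · field_simp; ring

end Cycle

lemma one_div_six_mul_sum_sq_le_div (x : Fin N → ℝ) {C₀ : ℝ} (hC₀ : 0 ≤ C₀)
    (hx : 1 / N * ∑ i, x i ^ 2 ≤ C₀) : 1 / (6 * N ^ 3) * ∑ i, x i ^ 2 ≤ C₀ / N := by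
  rcases N.eq_zero_or_pos with rfl | hN
  · simp
  have hN1 : (1 : ℝ) ≤ N := by exact_mod_cast hN
  calc 1 / (6 * N ^ 3) * ∑ i, x i ^ 2 = 1 / (6 * N ^ 2) * (1 / N * ∑ i, x i ^ 2) := by
        field_simp
    _ ≤ 1 / (6 * N ^ 2) * C₀ := by gcongr
    _ ≤ C₀ / N := by
        rw [one_div_mul_eq_div]
        exact div_le_div_of_nonneg_left hC₀ (by positivity) (by nlinarith)

end Hm1Comparison

open Hm1Comparison

/-- `⟨A⁻¹x, x⟩` is expressed through a preimage `z` of `x` under `A`. -/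
theorem statement14 :
    ∃ C : ℝ, 0 < C ∧
      (∀ (N : ℕ) (x z : Fin N → ℝ), (∑ i, x i = 0) → (∑ i, z i = 0) →
        (∀ i, Amat N z i = x i) →
        ((1 / C) * Hm1sq N x ≤ (1 / (N : ℝ)) * ∑ i, z i * x i ∧
          (1 / (N : ℝ)) * ∑ i, z i * x i ≤ C * Hm1sq N x ∧
          Hm1sq N x ≤ (1 / (N : ℝ)) * ∑ i, z i * x i ∧
          (1 / (N : ℝ)) * ∑ i, z i * x i ≤ 3 * Hm1sq N x)) ∧
      ∀ C₀ : ℝ, 0 < C₀ → ∃ C' : ℝ, 0 < C' ∧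
        ∀ (N : ℕ) (x z : Fin N → ℝ), (∑ i, x i = 0) → (∑ i, z i = 0) →
          (∀ i, Amat N z i = x i) →
          ((1 / (N : ℝ)) * ∑ i, (x i) ^ 2 ≤ C₀) →
          |Hm1sq N x - (1 / (N : ℝ)) * ∑ i, z i * x i| ≤ C' / N := by
  refine ⟨3, by norm_num, fun N x z _ _ hAz => ?_,
    fun C₀ hC₀ => ⟨C₀, hC₀, fun N x z _ _ hAz hC => ?_⟩⟩
  · obtain rfl : Amat N z = x := funext hAz
    have hcorr_nonneg : 0 ≤ 1 / (6 * (N : ℝ) ^ 3) * ∑ i, Amat N z i ^ 2 := by positivity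
    have hcorr_le := one_div_six_mul_sum_sq_Amat_le z
    rw [Hm1sq_Amat]
    refine ⟨by linarith, by linarith, by linarith, by linarith⟩
  · obtain rfl : Amat N z = x := funext hAz
    rw [Hm1sq_Amat, sub_sub_cancel_left, abs_neg, abs_of_nonneg (by positivity)]
    exact one_div_six_mul_sum_sq_le_div _ hC₀.le hC
end
end

section
/- Let (Y, ⟨·,·⟩) be a finite-dimensional real inner product space, H̄ : Y → ℝ a convex C¹ function, Ā : Y → Y a symmetric positive-definite linear operator, and T > 0. A C¹ curve η : [0,T] → Y satisfies dη/dt(t) = −Ā∇H̄(η(t)) for all t ∈ [0,T] if and only if for every ξ ∈ Y and every smooth β : [0,T] → [0,∞) with β(0) = β(T) = 0, ∫₀^T H̄(η(t)) β(t) dt ≤ ∫₀^T H̄(η(t) + ξ) β(t) dt − ∫₀^T ⟨ξ, Ā^{-1} η(t)⟩ β'(t) dt. -/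
/-!
Integrating by parts, the weak inequality for `(ξ, β)` reads `0 ≤ ∫₀ᵀ g_ξ β` with
`g_ξ t = H̄(η t + ξ) + ⟪ξ, Ā⁻¹ η'(t)⟫ - H̄(η t)`, and by the fundamental lemma of the calculus of
variations this holds for all admissible `β` iff `g_ξ ≥ 0` on `[0, T]`. For a convex
differentiable `H̄`, the inequality `H̄ x ≤ H̄ (x + ξ) + ⟪ξ, v⟫` for all `ξ` says that `-v` is a
subgradient of `H̄` at `x`, i.e. `∇H̄ x = -v`; with `v = Ā⁻¹ η'(t)` this is the gradient flow.
-/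

open MeasureTheory Real
open scoped RealInnerProductSpace

section Gradient

variable {E : Type*} [NormedAddCommGroup E] [InnerProductSpace ℝ E] [CompleteSpace E]
  {H : E → ℝ} {x : E}

theorem ConvexOn.add_inner_gradient_le (hH : ConvexOn ℝ Set.univ H)
    (hd : DifferentiableAt ℝ H x) (ξ : E) :
    H x + ⟪gradient H x, ξ⟫ ≤ H (x + ξ) := by
  have hline : (H ∘ AffineMap.lineMap x (x + ξ)) = fun s : ℝ => H (x + s • ξ) := by
    ext s
    simp [AffineMap.lineMap_apply_module', add_comm]
  have hconv : ConvexOn ℝ Set.univ fun s : ℝ => H (x + s • ξ) := by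
    simpa [hline] using hH.comp_affineMap (AffineMap.lineMap x (x + ξ))
  have hderiv : HasDerivAt (fun s : ℝ => H (x + s • ξ)) ⟪gradient H x, ξ⟫ 0 := by
    have hg : HasFDerivAt H (InnerProductSpace.toDual ℝ E (gradient H x)) (x + (0 : ℝ) • ξ) := by
      simpa using hd.hasGradientAt.hasFDerivAt
    have hc : HasDerivAt (fun s : ℝ => x + s • ξ) ξ 0 := by
      simpa using ((hasDerivAt_id (0 : ℝ)).smul_const ξ).const_add x
    exact hg.comp_hasDerivAt (x := 0) hc
  have := hconv.le_slope_of_hasDerivAt (Set.mem_univ 0) (Set.mem_univ 1) one_pos hderiv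
  simp only [slope_def_field, one_smul, zero_smul, add_zero, sub_zero, div_one] at this
  linarith

theorem gradient_eq_neg_of_forall_le_add_inner (hd : DifferentiableAt ℝ H x) {v : E}
    (hmin : ∀ ξ, H x ≤ H (x + ξ) + ⟪ξ, v⟫) : gradient H x = -v := by
  have hf : HasFDerivAt (fun ξ => H (x + ξ) + ⟪v, ξ⟫) (fderiv ℝ H x + innerSL ℝ v) 0 := by
    refine HasFDerivAt.add ?_ (innerSL ℝ v).hasFDerivAt
    exact (hasFDerivAt_comp_add_left x).2 (by simpa using hd.hasFDerivAt)
  have hloc : IsLocalMin (fun ξ => H (x + ξ) + ⟪v, ξ⟫) 0 :=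
    IsMinOn.isLocalMin (fun ξ _ => by simpa [real_inner_comm] using hmin ξ) Filter.univ_mem
  have hzero := hloc.hasFDerivAt_eq_zero hf
  have hfderiv : fderiv ℝ H x = InnerProductSpace.toDual ℝ E (-v) := by
    rw [← sub_eq_zero, map_neg, sub_neg_eq_add]
    exact hzero
  exact HasGradientAt.gradient (hasGradientAt_iff_hasFDerivAt.2 (hfderiv ▸ hd.hasFDerivAt))

theorem ConvexOn.forall_le_add_inner_iff_gradient_eq (hH : ConvexOn ℝ Set.univ H)
    (hd : DifferentiableAt ℝ H x) (v : E) :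
    (∀ ξ, H x ≤ H (x + ξ) + ⟪ξ, v⟫) ↔ gradient H x = -v := by
  refine ⟨gradient_eq_neg_of_forall_le_add_inner hd, fun hgrad ξ => ?_⟩
  have := hH.add_inner_gradient_le hd ξ
  rw [hgrad, inner_neg_left, real_inner_comm] at this
  linarith

end Gradient

theorem nonneg_of_forall_integral_mul_bump_nonneg {g : ℝ → ℝ} (hg : Continuous g) {a b : ℝ}
    (hab : a < b)
    (h : ∀ β : ℝ → ℝ, ContDiff ℝ (⊤ : ℕ∞) β → (∀ t ∈ Set.Icc a b, 0 ≤ β t) →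
      β a = 0 → β b = 0 → 0 ≤ ∫ t in a..b, g t * β t) :
    ∀ t ∈ Set.Icc a b, 0 ≤ g t := by
  suffices hIoo : ∀ t ∈ Set.Ioo a b, 0 ≤ g t by
    rw [← closure_Ioo hab.ne]
    exact (isClosed_le continuous_const hg).closure_subset_iff.2 hIoo
  intro t₀ ht₀
  by_contra! hneg
  obtain ⟨δ, hδ, hball⟩ := Metric.isOpen_iff.1
    ((isOpen_Iio.preimage hg).inter isOpen_Ioo) t₀ ⟨hneg, ht₀⟩
  let β : ContDiffBump t₀ := ⟨δ / 2, δ, by linarith, by linarith⟩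
  have hβ_out : ∀ t ∉ Set.Ioo a b, β t = 0 := fun t ht =>
    β.zero_of_le_dist (not_lt.1 fun hlt => ht (hball (Metric.mem_ball.2 hlt)).2)
  have hgβ : ∀ t, g t * β t ≤ 0 := by
    intro t
    by_cases ht : dist t t₀ < δ
    · exact mul_nonpos_of_nonpos_of_nonneg (hball (Metric.mem_ball.2 ht)).1.le β.nonneg
    · rw [β.zero_of_le_dist (not_lt.1 ht), mul_zero]
  have hlt : ∫ t in a..b, g t * β t < ∫ t in a..b, (0 : ℝ) :=
    intervalIntegral.integral_lt_integral_of_continuousOn_of_le_of_exists_lt hab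
      (hg.mul β.continuous).continuousOn continuousOn_const (fun t _ => hgβ t)
      ⟨t₀, Set.Ioo_subset_Icc_self ht₀, by
        rwa [β.one_of_mem_closedBall (Metric.mem_closedBall_self β.rIn_pos.le), mul_one]⟩
  have := h β β.contDiff (fun t _ => β.nonneg) (hβ_out a (fun h => h.1.false))
    (hβ_out b (fun h => h.2.false))
  simp only [intervalIntegral.integral_zero] at hlt
  linarith

theorem forall_integral_mul_bump_nonneg_iff {g : ℝ → ℝ} (hg : Continuous g) {a b : ℝ}
    (hab : a < b) :
    (∀ β : ℝ → ℝ, ContDiff ℝ (⊤ : ℕ∞) β → (∀ t ∈ Set.Icc a b, 0 ≤ β t) →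
      β a = 0 → β b = 0 → 0 ≤ ∫ t in a..b, g t * β t) ↔ ∀ t ∈ Set.Icc a b, 0 ≤ g t :=
  ⟨nonneg_of_forall_integral_mul_bump_nonneg hg hab, fun hg₀ _ _ hβ _ _ =>
    intervalIntegral.integral_nonneg hab.le fun t ht => mul_nonneg (hg₀ t ht) (hβ t ht)⟩

section WeakForm

variable {E : Type*} [NormedAddCommGroup E] [NormedSpace ℝ E] {η : ℝ → E} {β : ℝ → ℝ} {a b : ℝ}

theorem integral_apply_mul_deriv_eq_neg (φ : E →L[ℝ] ℝ) (hη : ContDiff ℝ 1 η)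
    (hβ : ContDiff ℝ 1 β) (ha : β a = 0) (hb : β b = 0) :
    ∫ t in a..b, φ (η t) * deriv β t = -∫ t in a..b, φ (deriv η t) * β t := by
  have hφη : ∀ t, HasDerivAt (fun t => φ (η t)) (φ (deriv η t)) t := fun t =>
    φ.hasFDerivAt.comp_hasDerivAt t ((hη.differentiable one_ne_zero) t).hasDerivAt
  rw [intervalIntegral.integral_mul_deriv_eq_deriv_mul (fun t _ => hφη t)
    (fun t _ => ((hβ.differentiable one_ne_zero) t).hasDerivAt)
    ((φ.continuous.comp (hη.continuous_deriv le_rfl)).intervalIntegrable a b)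
    ((hβ.continuous_deriv le_rfl).intervalIntegrable a b), ha, hb]
  ring

theorem integral_le_integral_sub_integral_mul_deriv_iff {H : E → ℝ} (hH : Continuous H)
    (hη : ContDiff ℝ 1 η) (ξ : E) (φ : E →L[ℝ] ℝ) (hβ : ContDiff ℝ 1 β) (ha : β a = 0)
    (hb : β b = 0) :
    (∫ t in a..b, H (η t) * β t) ≤
        (∫ t in a..b, H (η t + ξ) * β t) - ∫ t in a..b, φ (η t) * deriv β t ↔
      0 ≤ ∫ t in a..b, (H (η t + ξ) + φ (deriv η t) - H (η t)) * β t := by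
  have hηc := hη.continuous
  have hη'c := hη.continuous_deriv le_rfl
  have hβc := hβ.continuous
  have hsplit : ∫ t in a..b, (H (η t + ξ) + φ (deriv η t) - H (η t)) * β t =
      (∫ t in a..b, H (η t + ξ) * β t) + (∫ t in a..b, φ (deriv η t) * β t) -
        ∫ t in a..b, H (η t) * β t := by
    simp only [add_mul, sub_mul]
    rw [intervalIntegral.integral_sub, intervalIntegral.integral_add] <;>
      apply Continuous.intervalIntegrable <;> fun_prop
  rw [integral_apply_mul_deriv_eq_neg φ hη hβ ha hb, sub_neg_eq_add, ← sub_nonneg, hsplit]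

end WeakForm

theorem statement17_general {E : Type*} [NormedAddCommGroup E] [InnerProductSpace ℝ E]
    [FiniteDimensional ℝ E]
    (H : E → ℝ) (hHconv : ConvexOn ℝ Set.univ H) (hHC1 : ContDiff ℝ 1 H)
    (Abar Ainv : E →ₗ[ℝ] E)
    (hinv₁ : ∀ x, Abar (Ainv x) = x) (hinv₂ : ∀ x, Ainv (Abar x) = x)
    (T : ℝ) (hT : 0 < T) (η : ℝ → E) (hη : ContDiff ℝ 1 η) :
    (∀ t ∈ Set.Icc (0 : ℝ) T, deriv η t = -Abar (gradient H (η t))) ↔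
      (∀ (ξ : E) (β : ℝ → ℝ), ContDiff ℝ (⊤ : ℕ∞) β →
        (∀ t ∈ Set.Icc (0 : ℝ) T, 0 ≤ β t) → β 0 = 0 → β T = 0 →
        (∫ t in (0:ℝ)..T, H (η t) * β t) ≤
          (∫ t in (0:ℝ)..T, H (η t + ξ) * β t)
            - ∫ t in (0:ℝ)..T, ⟪ξ, Ainv (η t)⟫ * deriv β t) := by
  have hd : Differentiable ℝ H := hHC1.differentiable one_ne_zero
  have hAinv : Continuous Ainv := LinearMap.continuous_of_finiteDimensional Ainv
  have hη' : Continuous (deriv η) := hη.continuous_deriv le_rfl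
  let φ (ξ : E) : E →L[ℝ] ℝ := (innerSL ℝ ξ).comp (LinearMap.toContinuousLinearMap Ainv)
  calc (∀ t ∈ Set.Icc (0 : ℝ) T, deriv η t = -Abar (gradient H (η t)))
      ↔ ∀ t ∈ Set.Icc (0 : ℝ) T, gradient H (η t) = -Ainv (deriv η t) := by
        refine forall₂_congr fun t _ => ⟨fun h => ?_, fun h => ?_⟩
        · rw [h, map_neg, hinv₂, neg_neg]
        · rw [h, map_neg, hinv₁, neg_neg]
    _ ↔ ∀ t ∈ Set.Icc (0 : ℝ) T, ∀ ξ : E,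
          0 ≤ H (η t + ξ) + ⟪ξ, Ainv (deriv η t)⟫ - H (η t) := by
        refine forall₂_congr fun t _ => ?_
        simp only [sub_nonneg]
        exact (hHconv.forall_le_add_inner_iff_gradient_eq (hd _) _).symm
    _ ↔ ∀ ξ : E, ∀ t ∈ Set.Icc (0 : ℝ) T,
          0 ≤ H (η t + ξ) + ⟪ξ, Ainv (deriv η t)⟫ - H (η t) :=
        ⟨fun h ξ t ht => h t ht ξ, fun h t ht ξ => h ξ t ht⟩
    _ ↔ _ := by
        refine forall_congr' fun ξ => ?_
        rw [← forall_integral_mul_bump_nonneg_iff (by fun_prop) hT]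
        refine forall₂_congr fun β hβ => forall₃_congr fun _ hβ₀ hβT => ?_
        exact (integral_le_integral_sub_integral_mul_deriv_iff hHC1.continuous hη ξ (φ ξ)
          (hβ.of_le (by simp)) hβ₀ hβT).symm

/-- Weak (inequality) formulation of the gradient flow
`dη/dt = -Ā∇H̄(η)` for a convex `C¹` function `H̄` and a symmetric positive-definite
operator `Ā` (with inverse `Ā⁻¹`): the ODE holds on `[0,T]` iff for every `ξ` and every
smooth nonnegative `β` vanishing at `0` and `T`,
`∫₀ᵀ H̄(η)β ≤ ∫₀ᵀ H̄(η+ξ)β - ∫₀ᵀ ⟪ξ, Ā⁻¹η⟫ β'`. -/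
theorem statement17 {E : Type*} [NormedAddCommGroup E] [InnerProductSpace ℝ E]
    [FiniteDimensional ℝ E]
    (H : E → ℝ) (hHconv : ConvexOn ℝ Set.univ H) (hHC1 : ContDiff ℝ 1 H)
    (Abar Ainv : E →ₗ[ℝ] E)
    (hsym : ∀ x y : E, ⟪Abar x, y⟫ = ⟪x, Abar y⟫)
    (hpos : ∀ x : E, x ≠ 0 → 0 < ⟪Abar x, x⟫)
    (hinv₁ : ∀ x, Abar (Ainv x) = x) (hinv₂ : ∀ x, Ainv (Abar x) = x)
    (T : ℝ) (hT : 0 < T) (η : ℝ → E) (hη : ContDiff ℝ 1 η) :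
    (∀ t ∈ Set.Icc (0 : ℝ) T, deriv η t = -Abar (gradient H (η t))) ↔
      (∀ (ξ : E) (β : ℝ → ℝ), ContDiff ℝ (⊤ : ℕ∞) β →
        (∀ t ∈ Set.Icc (0 : ℝ) T, 0 ≤ β t) → β 0 = 0 → β T = 0 →
        (∫ t in (0:ℝ)..T, H (η t) * β t) ≤
          (∫ t in (0:ℝ)..T, H (η t + ξ) * β t)
            - ∫ t in (0:ℝ)..T, ⟪ξ, Ainv (η t)⟫ * deriv β t) :=
  statement17_general H hHconv hHC1 Abar Ainv hinv₁ hinv₂ T hT η hη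
end

section
/- For every C₀ > 0 and every δ > 0 there exists λ < 1 such that every Borel probability measure ν on ℝ satisfying ∫ |x| ν(dx) ≤ C₀ and |∫ e^{ixξ} ν(dx)| ≤ C₀/|ξ| for all ξ ≠ 0 also satisfies |∫ e^{ixξ} ν(dx)| ≤ λ for all ξ with |ξ| ≥ δ. -/
open MeasureTheory ENNReal Real

noncomputable section

/-! The doubling inequality `1 - |φ(2ξ)| ≤ 4 (1 - |φ(ξ)|)` for a characteristic function `φ`
follows from `1 - cos 2u ≤ 4 (1 - cos u)` after rotating `φ(ξ)` onto the positive real axis.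
Iterated, it gives `1 - |φ(2ⁿξ)| ≤ 4ⁿ (1 - |φ(ξ)|)`; choosing `n` with `C₀ / (2ⁿ δ) < 1/2`,
the decay bound makes the left side exceed `1/2` whenever `|ξ| ≥ δ`, so
`|φ(ξ)| ≤ 1 - 1 / (2 · 4ⁿ)`. -/

lemma one_sub_cos_two_mul_le (u : ℝ) : 1 - cos (2 * u) ≤ 4 * (1 - cos u) := by
  nlinarith [cos_two_mul u, sq_nonneg (cos u - 1)]

section CharFun

variable {E : Type*} [NormedAddCommGroup E] [InnerProductSpace ℝ E]
  [MeasurableSpace E] [OpensMeasurableSpace E] {μ : Measure E} [IsProbabilityMeasure μ]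

lemma integrable_cos_inner_sub (t : E) (θ : ℝ) :
    Integrable (fun x ↦ cos (inner ℝ x t - θ)) μ :=
  (integrable_const (1 : ℝ)).mono' (by fun_prop)
    (ae_of_all _ fun x ↦ by simpa using abs_cos_le_one (inner ℝ x t - θ))

lemma re_exp_mul_charFun (t : E) (θ : ℝ) :
    (Complex.exp (-θ * Complex.I) * charFun μ t).re = ∫ x, cos (inner ℝ x t - θ) ∂μ := by
  have hint : Integrable (fun x ↦ Complex.exp (-θ * Complex.I) *
      Complex.exp (inner ℝ x t * Complex.I)) μ :=
    (integrable_const (1 : ℝ)).mono' (by fun_prop) (ae_of_all _ fun x ↦ by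
      simp [← Complex.exp_add, ← sub_eq_neg_add, Complex.norm_exp])
  rw [charFun_apply, ← integral_const_mul, ← RCLike.re_to_complex, ← integral_re hint]
  congr with x
  rw [RCLike.re_to_complex, ← Complex.exp_add, ← Complex.exp_ofReal_mul_I_re]
  push_cast
  ring_nf

lemma integral_cos_inner_sub_le_norm_charFun (t : E) (θ : ℝ) :
    ∫ x, cos (inner ℝ x t - θ) ∂μ ≤ ‖charFun μ t‖ := by
  rw [← re_exp_mul_charFun]
  refine (Complex.re_le_norm _).trans_eq ?_
  simp [Complex.norm_exp]

lemma norm_charFun_eq_integral_cos (t : E) :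
    ‖charFun μ t‖ = ∫ x, cos (inner ℝ x t - (charFun μ t).arg) ∂μ := by
  have hrot : Complex.exp (-(charFun μ t).arg * Complex.I) * charFun μ t = ‖charFun μ t‖ := by
    nth_rw 2 [← Complex.norm_mul_exp_arg_mul_I (charFun μ t)]
    rw [mul_left_comm, ← Complex.exp_add, neg_mul, neg_add_cancel, Complex.exp_zero, mul_one]
  rw [← re_exp_mul_charFun, hrot, Complex.ofReal_re]

lemma one_sub_norm_charFun_two_smul_le (t : E) :
    1 - ‖charFun μ ((2 : ℝ) • t)‖ ≤ 4 * (1 - ‖charFun μ t‖) := by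
  set θ := (charFun μ t).arg
  have hcos2 : ∫ x, cos (2 * (inner ℝ x t - θ)) ∂μ ≤ ‖charFun μ ((2 : ℝ) • t)‖ := by
    simpa only [real_inner_smul_right, ← mul_sub] using
      integral_cos_inner_sub_le_norm_charFun (μ := μ) ((2 : ℝ) • t) (2 * θ)
  have hint2 : Integrable (fun x ↦ cos (2 * (inner ℝ x t - θ))) μ := by
    simpa only [real_inner_smul_right, ← mul_sub] using
      integrable_cos_inner_sub (μ := μ) ((2 : ℝ) • t) (2 * θ)
  have hmono : ∫ x, (1 - cos (2 * (inner ℝ x t - θ))) ∂μ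
      ≤ ∫ x, 4 * (1 - cos (inner ℝ x t - θ)) ∂μ :=
    integral_mono ((integrable_const 1).sub hint2)
      (((integrable_const 1).sub (integrable_cos_inner_sub t θ)).const_mul 4)
      fun x ↦ one_sub_cos_two_mul_le _
  rw [integral_sub (integrable_const 1) hint2, integral_const_mul,
    integral_sub (integrable_const 1) (integrable_cos_inner_sub t θ),
    ← norm_charFun_eq_integral_cos] at hmono
  simp only [integral_const, probReal_univ, smul_eq_mul, mul_one] at hmono
  linarith

lemma one_sub_norm_charFun_pow_two_smul_le (t : E) (n : ℕ) :
    1 - ‖charFun μ ((2 : ℝ) ^ n • t)‖ ≤ 4 ^ n * (1 - ‖charFun μ t‖) := by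
  induction n with
  | zero => simp
  | succ n ih =>
    calc 1 - ‖charFun μ ((2 : ℝ) ^ (n + 1) • t)‖
        ≤ 4 * (1 - ‖charFun μ ((2 : ℝ) ^ n • t)‖) := by
          rw [pow_succ', mul_smul]; exact one_sub_norm_charFun_two_smul_le _
      _ ≤ 4 ^ (n + 1) * (1 - ‖charFun μ t‖) := by rw [pow_succ', mul_assoc]; gcongr

lemma norm_charFun_le_of_norm_charFun_pow_two_smul_le {t : E} {n : ℕ}
    (h : ‖charFun μ ((2 : ℝ) ^ n • t)‖ ≤ 1 / 2) :
    ‖charFun μ t‖ ≤ 1 - 1 / (2 * 4 ^ n) := by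
  have := one_sub_norm_charFun_pow_two_smul_le (μ := μ) t n
  rw [le_sub_comm, div_le_iff₀ (by positivity)]
  nlinarith

end CharFun

theorem statement18_general (C₀ δ : ℝ) (hδ : 0 < δ) :
    ∃ lam : ℝ, lam < 1 ∧
      ∀ ν : Measure ℝ, IsProbabilityMeasure ν →
        (∫⁻ x, ENNReal.ofReal |x| ∂ν) ≤ ENNReal.ofReal C₀ →
        (∀ ξ : ℝ, ξ ≠ 0 →
          ‖∫ x, Complex.exp (Complex.I * x * ξ) ∂ν‖ ≤ C₀ / |ξ|) →
        ∀ ξ : ℝ, δ ≤ |ξ| →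
          ‖∫ x, Complex.exp (Complex.I * x * ξ) ∂ν‖ ≤ lam := by
  obtain ⟨n, hn⟩ := pow_unbounded_of_one_lt (2 * C₀ / δ) (one_lt_two (α := ℝ))
  refine ⟨1 - 1 / (2 * 4 ^ n), sub_lt_self _ (by positivity), fun ν _ _ hdecay ξ hξ ↦ ?_⟩
  have hcharFun (t : ℝ) : ∫ x, Complex.exp (Complex.I * x * t) ∂ν = charFun ν t := by
    rw [charFun_apply_real]; congr with x; ring_nf
  rw [hcharFun]
  refine norm_charFun_le_of_norm_charFun_pow_two_smul_le (n := n) ?_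
  have hξ0 : ξ ≠ 0 := abs_pos.mp (hδ.trans_le hξ)
  have h2n : (0 : ℝ) < 2 ^ n := by positivity
  calc ‖charFun ν ((2 : ℝ) ^ n • ξ)‖ ≤ C₀ / (2 ^ n * |ξ|) := by
        have := hdecay _ (smul_ne_zero h2n.ne' hξ0)
        rwa [hcharFun, smul_eq_mul, abs_mul, abs_of_pos h2n] at this
    _ ≤ 1 / 2 := by
        rw [div_lt_iff₀ hδ] at hn
        rw [div_le_iff₀ (by positivity)]
        nlinarith

/-- Uniform decay of characteristic functions away from the origin: for
every `C₀ > 0` and `δ > 0` there is `λ < 1` such that every probability measure `ν` on `ℝ`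
with `∫|x| dν ≤ C₀` and `|ν̂(ξ)| ≤ C₀/|ξ|` for all `ξ ≠ 0` satisfies `|ν̂(ξ)| ≤ λ` for all
`|ξ| ≥ δ`. -/
theorem statement18 (C₀ δ : ℝ) (hC₀ : 0 < C₀) (hδ : 0 < δ) :
    ∃ lam : ℝ, lam < 1 ∧
      ∀ ν : Measure ℝ, IsProbabilityMeasure ν →
        (∫⁻ x, ENNReal.ofReal |x| ∂ν) ≤ ENNReal.ofReal C₀ →
        (∀ ξ : ℝ, ξ ≠ 0 →
          ‖∫ x, Complex.exp (Complex.I * x * ξ) ∂ν‖ ≤ C₀ / |ξ|) →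
        ∀ ξ : ℝ, δ ≤ |ξ| →
          ‖∫ x, Complex.exp (Complex.I * x * ξ) ∂ν‖ ≤ lam :=
  statement18_general C₀ δ hδ
end
end
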